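/- arXiv:2312.10156 — 6 statements merged into one kernel-verified Lean document; each statement's English description precedes it below -/
import Mathlib

section
/- Let H ∈ 𝔽₂^{m×n}, s ∈ 𝔽₂^n, and d ∈ 𝔽₂^n. Define H_s = diag(H s)·H and the code space C_s = range H_s ⊆ 𝔽₂^m with radical rad C_s = C_s ∩ C_s^⊥ (standard form). If H_s d ∈ rad C_s, then s ∈ ker(H_dᵀ H_d), where H_d = diag(H d)·H. -/
/-! Since `x * x = x` in `𝔽₂`, the Gram vector `H_aᵀ H_a b = Hᵀ (H a ⊙ H b)` is symmetric in
`a` and `b`. So `H_dᵀ H_d s = H_sᵀ H_s d`, whose `j`-th entry is `⟨H_s d, H_s e_j⟩ = 0` because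
`H_s d` is orthogonal to all of `C_s`. -/

open Matrix

/-- `H_s = diag(H s) · H` over `𝔽₂`. -/
def Hvec {m n : ℕ} (H : Matrix (Fin m) (Fin n) (ZMod 2)) (s : Fin n → ZMod 2) :
    Matrix (Fin m) (Fin n) (ZMod 2) :=
  Matrix.of fun i j => H.mulVec s i * H i j

theorem Matrix.transpose_mul_self_mulVec_eq_zero {R m n : Type*} [CommSemiring R] [Fintype m]
    [Fintype n] (M : Matrix m n R) (d : n → R)
    (h : ∀ w ∈ LinearMap.range M.mulVecLin, M *ᵥ d ⬝ᵥ w = 0) :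
    (Mᵀ * M) *ᵥ d = 0 :=
  dotProduct_eq_zero _ fun e => by
    rw [← mulVec_mulVec, mulVec_transpose, ← dotProduct_mulVec]
    exact h _ ⟨e, rfl⟩

section Hvec

variable {m n : ℕ} (H : Matrix (Fin m) (Fin n) (ZMod 2))

theorem Hvec_mulVec (a b : Fin n → ZMod 2) : Hvec H a *ᵥ b = H *ᵥ a * H *ᵥ b := by
  ext i
  simp only [Hvec, mulVec, dotProduct, of_apply, Pi.mul_apply, Finset.mul_sum, mul_assoc]

theorem Hvec_transpose_mul_self_mulVec (a b : Fin n → ZMod 2) :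
    ((Hvec H a)ᵀ * Hvec H a) *ᵥ b = Hᵀ *ᵥ (H *ᵥ a * H *ᵥ b) := by
  ext j
  rw [← mulVec_mulVec, Hvec_mulVec, mulVec_transpose, mulVec_transpose]
  simp only [vecMul, dotProduct]
  refine Finset.sum_congr rfl fun i _ => ?_
  simp only [Hvec, Pi.mul_apply, of_apply]
  calc (H *ᵥ a) i * (H *ᵥ b) i * ((H *ᵥ a) i * H i j)
      = ((H *ᵥ a) i * (H *ᵥ a) i) * (H *ᵥ b) i * H i j := by ring
    _ = (H *ᵥ a) i * (H *ᵥ b) i * H i j := by rw [← sq, ZMod.pow_card]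

theorem Hvec_transpose_mul_self_mulVec_comm (a b : Fin n → ZMod 2) :
    ((Hvec H a)ᵀ * Hvec H a) *ᵥ b = ((Hvec H b)ᵀ * Hvec H b) *ᵥ a := by
  rw [Hvec_transpose_mul_self_mulVec, Hvec_transpose_mul_self_mulVec, mul_comm (H *ᵥ a)]

end Hvec

/-- If `H_s d` lies in the radical of the code space `C_s = range H_s` (with respect to the
standard form on `𝔽₂^m`), then `s ∈ ker (H_dᵀ H_d)`. -/
theorem radical_elt_gives_kernel_constraint {m n : ℕ}
    (H : Matrix (Fin m) (Fin n) (ZMod 2)) (s d : Fin n → ZMod 2)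
    (hrad : (Hvec H s).mulVec d ∈ LinearMap.range (Hvec H s).mulVecLin ∧
      ∀ w ∈ LinearMap.range (Hvec H s).mulVecLin,
        dotProduct ((Hvec H s).mulVec d) w = 0) :
    ((Hvec H d)ᵀ * Hvec H d).mulVec s = 0 := by
  rw [Hvec_transpose_mul_self_mulVec_comm]
  exact (Hvec H s).transpose_mul_self_mulVec_eq_zero d hrad.2
end

section
/- Let M be a uniformly random m × (m − h) matrix over 𝔽₂ and fix k ≤ m/2. The probability that the column span of M contains a nonzero vector of Hamming weight at most k is at most k · C(m,k) · 2^{−h}, where C(m,k) is the binomial coefficient. -/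
/-!
For a fixed nonzero coefficient vector `c`, the map `M ↦ M *ᵥ c` is a surjective additive map,
so `M *ᵥ c` is uniformly distributed over `𝔽₂^m`. It therefore hits the set of nonzero
vectors of weight at most `k`, which has at most `k · C(m,k)` elements since `C(m,·)`
increases up to `m/2`, with probability at most `k · C(m,k) · 2^{-m}`. A union bound over
the `2^{m-h}` coefficient vectors gives the claim.
-/

open Matrix

/-- Hamming weight of a vector over `𝔽₂`. -/
def hammingWt {m : ℕ} (v : Fin m → ZMod 2) : ℕ :=
  (Finset.univ.filter fun i => v i ≠ 0).card

open Finset Function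

theorem Nat.choose_le_choose_of_le_of_two_mul_le {n j k : ℕ} (hjk : j ≤ k) (hk : 2 * k ≤ n) :
    n.choose j ≤ n.choose k := by
  induction k, hjk using Nat.le_induction with
  | base => rfl
  | succ k _ ih => exact (ih (by omega)).trans (Nat.choose_le_succ_of_lt_half_left (by omega))

section Counting

variable {ι : Type*} [Fintype ι] [DecidableEq ι]

theorem card_hammingNorm_eq_le_choose (j : ℕ) :
    #{v : ι → ZMod 2 | hammingNorm v = j} ≤ (Fintype.card ι).choose j := by
  rw [← card_univ, ← card_powersetCard]
  refine card_le_card_of_injOn (fun v => ({i | v i ≠ 0} : Finset ι)) (fun v hv => ?_)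
    fun v _ w _ hvw => ?_
  · simpa [mem_powersetCard, hammingNorm] using hv
  · have supp_iff (i : ι) : v i ≠ 0 ↔ w i ≠ 0 := by simpa using congrArg (i ∈ ·) hvw
    funext i
    exact (by decide : ∀ a b : ZMod 2, (a ≠ 0 ↔ b ≠ 0) → a = b) _ _ (supp_iff i)

theorem card_ne_zero_and_hammingNorm_le_le {k : ℕ} (hk : 2 * k ≤ Fintype.card ι) :
    #{v : ι → ZMod 2 | v ≠ 0 ∧ hammingNorm v ≤ k} ≤ k * (Fintype.card ι).choose k := by
  rw [card_eq_sum_card_fiberwise (f := hammingNorm) (t := Icc 1 k) fun v hv => ?_]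
  · calc _ ≤ ∑ j ∈ Icc 1 k, (Fintype.card ι).choose k := sum_le_sum fun j hj =>
          calc _ ≤ #{v : ι → ZMod 2 | hammingNorm v = j} :=
                card_le_card (filter_subset_filter _ (subset_univ _))
            _ ≤ _ := card_hammingNorm_eq_le_choose j
            _ ≤ _ := Nat.choose_le_choose_of_le_of_two_mul_le (mem_Icc.mp hj).2 hk
      _ = _ := by simp
  · simp only [coe_filter, mem_univ, true_and] at hv
    simpa [Nat.one_le_iff_ne_zero, hammingNorm_eq_zero] using hv

end Counting

theorem AddMonoidHom.card_preimage_mul_card_eq {A B : Type*} [AddGroup A] [Fintype A]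
    [AddGroup B] [Fintype B] [DecidableEq B] (f : A →+ B) (hf : Surjective f) (V : Finset B) :
    #{a | f a ∈ V} * Fintype.card B = #V * Fintype.card A := by
  set d := #{a | f a = 0}
  have hfiber (b : B) : #{a | f a = b} = d :=
    AddMonoidHom.card_fiber_eq_of_mem_range f (hf b) (hf 0)
  have hA : Fintype.card A = Fintype.card B * d := by
    rw [← card_univ,
      card_eq_sum_card_fiberwise (f := f) (t := univ) fun _ _ => mem_coe.2 (mem_univ _)]
    simp [hfiber]
  have hV : #{a | f a ∈ V} = #V * d := by
    rw [card_eq_sum_card_fiberwise (f := f) (t := V) fun a ha => by simpa using ha]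
    rw [sum_congr rfl fun b hb => ?_, sum_const, smul_eq_mul]
    rw [filter_filter, ← hfiber b]
    congr 1
    ext a
    simp only [mem_filter, mem_univ, true_and, and_iff_right_iff_imp]
    rintro rfl; exact hb
  rw [hA, hV]; ring

theorem Matrix.mulVec_surjective_of_ne_zero {ι κ K : Type*} [Fintype κ] [DecidableEq κ]
    [DivisionRing K] {c : κ → K} (hc : c ≠ 0) : Surjective fun M : Matrix ι κ K => M *ᵥ c := by
  obtain ⟨j, hj⟩ := Function.ne_iff.mp hc
  intro v
  refine ⟨vecMulVec v (Pi.single j (c j)⁻¹), ?_⟩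
  simp [vecMulVec_mulVec, single_dotProduct, inv_mul_cancel₀ hj]

section UnionBound

variable {ι κ K : Type*} [Fintype ι] [DecidableEq ι] [Fintype κ] [DecidableEq κ]
  [Field K] [Fintype K] [DecidableEq K]

theorem card_mulVec_mem_mul_card_eq {c : κ → K} (hc : c ≠ 0) (V : Finset (ι → K)) :
    #{M : Matrix ι κ K | M *ᵥ c ∈ V} * Fintype.card (ι → K)
      = #V * Fintype.card (Matrix ι κ K) :=
  AddMonoidHom.card_preimage_mul_card_eq
    { toFun := (· *ᵥ c), map_zero' := zero_mulVec c, map_add' := fun M N => add_mulVec M N c }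
    (mulVec_surjective_of_ne_zero hc) V

theorem card_exists_mulVec_mem_mul_card_le (V : Finset (ι → K)) (hV : 0 ∉ V) :
    #{M : Matrix ι κ K | ∃ c, M *ᵥ c ∈ V} * Fintype.card (ι → K)
      ≤ Fintype.card (κ → K) * (#V * Fintype.card (Matrix ι κ K)) := by
  have hunion : ({M : Matrix ι κ K | ∃ c, M *ᵥ c ∈ V} : Finset _) =
      univ.biUnion fun c => {M | M *ᵥ c ∈ V} := by
    ext M; simp
  have hterm (c : κ → K) :
      #{M : Matrix ι κ K | M *ᵥ c ∈ V} * Fintype.card (ι → K)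
        ≤ #V * Fintype.card (Matrix ι κ K) := by
    rcases eq_or_ne c 0 with rfl | hc
    · simp [hV]
    · exact (card_mulVec_mem_mul_card_eq hc V).le
  calc _ ≤ (∑ c : κ → K, #{M : Matrix ι κ K | M *ᵥ c ∈ V}) * Fintype.card (ι → K) := by
        rw [hunion]; gcongr; exact card_biUnion_le
    _ ≤ ∑ _c : κ → K, #V * Fintype.card (Matrix ι κ K) := by
        rw [sum_mul]; exact sum_le_sum fun c _ => hterm c
    _ = _ := by simp

end UnionBound

/-- For a uniformly random `m × (m−h)` matrix `M` over `𝔽₂` and `k ≤ m/2`, the probability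
that the column span of `M` contains a nonzero vector of Hamming weight at most `k`
is at most `k · C(m,k) · 2^{−h}`. -/
theorem random_matrix_min_weight_bound {m h k : ℕ} (hhm : h ≤ m) (hk : 2 * k ≤ m) :
    (Nat.card {M : Matrix (Fin m) (Fin (m - h)) (ZMod 2) |
        ∃ v ∈ LinearMap.range M.mulVecLin, v ≠ 0 ∧ hammingWt v ≤ k} : ℝ) /
        2 ^ (m * (m - h))
      ≤ (k * m.choose k : ℝ) * (2 : ℝ)⁻¹ ^ h := by
  set n := m - h
  set V : Finset (Fin m → ZMod 2) := {v | v ≠ 0 ∧ hammingNorm v ≤ k}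
  set N := #{M : Matrix (Fin m) (Fin n) (ZMod 2) | ∃ c, M *ᵥ c ∈ V}
  have hN : Nat.card {M : Matrix (Fin m) (Fin n) (ZMod 2) |
      ∃ v ∈ LinearMap.range M.mulVecLin, v ≠ 0 ∧ hammingWt v ≤ k} = N := by
    classical
    rw [Nat.card_eq_fintype_card, Fintype.card_subtype]
    congr 1; ext M
    simp [V, hammingWt, hammingNorm]
  have hunion := card_exists_mulVec_mem_mul_card_le (κ := Fin n) V (by simp [V])
  have hV : #V ≤ k * m.choose k := by
    simpa using card_ne_zero_and_hammingNorm_le_le (ι := Fin m) (by simpa using hk)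
  rw [Fintype.card_congr Matrix.of.symm] at hunion
  simp only [Fintype.card_fun, Fintype.card_fin, ZMod.card, ← pow_mul, mul_comm n] at hunion
  have hcount : N * 2 ^ h ≤ k * m.choose k * 2 ^ (m * n) := by
    have h2m : 2 ^ m = 2 ^ n * 2 ^ h := by rw [← pow_add]; congr 1; omega
    refine Nat.le_of_mul_le_mul_left ?_ (by positivity : 0 < 2 ^ n)
    calc 2 ^ n * (N * 2 ^ h) = N * 2 ^ m := by rw [h2m]; ring
      _ ≤ 2 ^ n * (#V * 2 ^ (m * n)) := hunion
      _ ≤ 2 ^ n * (k * m.choose k * 2 ^ (m * n)) := by gcongr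
  rw [hN, div_le_iff₀ (by positivity), inv_pow, mul_right_comm, ← div_eq_mul_inv,
    le_div_iff₀ (by positivity)]
  exact_mod_cast hcount
end

section
/- Let H = [[F, D, 0],[A, B, C]] be a block matrix over 𝔽₂ with Dᵀ D = 0 and Dᵀ F = 0. Then every vector of the form (0, b, 0) ∈ 𝔽₂^g ⊕ 𝔽₂^d ⊕ 𝔽₂^{n−g−d} with b ∈ ker B satisfies H (0,b,0) = (D b, 0) and this image lies in the radical of range(F|D) (embedded in the first m₁ coordinates); consequently dim(rad range(F|D) ∩ H(ker Hᵀ H)) ≥ dim(D(ker B)). -/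
open Matrix

/-- Orthogonal complement of a subspace of `𝔽₂^ι` with respect to the standard bilinear form. -/
def dualOrth {ι : Type*} [Fintype ι] (W : Submodule (ZMod 2) (ι → ZMod 2)) :
    Submodule (ZMod 2) (ι → ZMod 2) where
  carrier := {x | ∀ w ∈ W, dotProduct x w = 0}
  add_mem' := by
    intro x y hx hy w hw
    simp [add_dotProduct, hx w hw, hy w hw]
  zero_mem' := by
    intro w hw
    simp
  smul_mem' := by
    intro c x hx w hw
    simp [smul_dotProduct, hx w hw]

/-- Embedding of `𝔽₂^{m₁}` into the first `m₁` coordinates of `𝔽₂^{m₁} ⊕ 𝔽₂^{m₂}`. -/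
def padL (m₁ m₂ : ℕ) : (Fin m₁ → ZMod 2) →ₗ[ZMod 2] (Fin m₁ ⊕ Fin m₂ → ZMod 2) where
  toFun v := Sum.elim v 0
  map_add' x y := by funext r; cases r <;> simp
  map_smul' c x := by funext r; cases r <;> simp

/-! The hypotheses say `Dᵀ (F | D | 0) = 0`. So for `b ∈ ker B` the vector
`H (0, b, 0) = (D b, 0)` lies in `range (F | D)` and is orthogonal to all of it, and
`Hᵀ (D b, 0) = (F | D | 0)ᵀ D b = 0` puts `(0, b, 0)` in `ker Hᵀ H`. -/

theorem Matrix.mulVec_dotProduct_mulVec_eq_zero {R l m n : Type*} [CommSemiring R] [Fintype l]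
    [Fintype m] [Fintype n] {M : Matrix l m R} {N : Matrix l n R} (h : Mᵀ * N = 0)
    (u : m → R) (v : n → R) : M *ᵥ u ⬝ᵥ N *ᵥ v = 0 := by
  rw [dotProduct_mulVec, ← vecMul_transpose, vecMul_vecMul, h, vecMul_zero, zero_dotProduct]

theorem Matrix.transpose_mulVec_mulVec_eq_zero {R l m n : Type*} [CommSemiring R] [Fintype l]
    [Fintype m] {M : Matrix l m R} {N : Matrix l n R} (h : Mᵀ * N = 0) (v : m → R) :
    Nᵀ *ᵥ (M *ᵥ v) = 0 := by
  rw [mulVec_mulVec, ← transpose_transpose M, ← transpose_mul, h, transpose_zero, zero_mulVec]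

theorem Matrix.transpose_fromRows_mulVec_sumElim_zero {R l k n : Type*} [Semiring R] [Fintype l]
    [Fintype k] (T : Matrix l n R) (S : Matrix k n R) (y : l → R) :
    (fromRows T S)ᵀ *ᵥ Sum.elim y 0 = Tᵀ *ᵥ y := by
  rw [transpose_fromRows, fromCols_mulVec_sumElim, mulVec_zero, add_zero]

theorem Matrix.mulVec_mem_range_fromCols_right {R l m n : Type*} [CommSemiring R] [Fintype m]
    [Fintype n] (F : Matrix l m R) (D : Matrix l n R) (b : n → R) :
    D *ᵥ b ∈ LinearMap.range (fromCols F D).mulVecLin :=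
  ⟨Sum.elim 0 b, by simp⟩

theorem mulVec_mem_dualOrth_range {l m n : Type*} [Fintype l] [Fintype m] [Fintype n]
    {D : Matrix l n (ZMod 2)} {M : Matrix l m (ZMod 2)} (h : Dᵀ * M = 0) (b : n → ZMod 2) :
    D *ᵥ b ∈ dualOrth (LinearMap.range M.mulVecLin) := by
  rintro _ ⟨x, rfl⟩
  exact mulVec_dotProduct_mulVec_eq_zero h b x

theorem Submodule.finrank_le_finrank_of_map_le {K V W : Type*} [DivisionRing K]
    [AddCommGroup V] [Module K V] [AddCommGroup W] [Module K W] [FiniteDimensional K W]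
    {f : V →ₗ[K] W} (hf : Function.Injective f) {p : Submodule K V} {q : Submodule K W}
    (h : p.map f ≤ q) : Module.finrank K p ≤ Module.finrank K q :=
  (equivMapOfInjective f hf p).finrank_eq.trans_le (finrank_mono h)

theorem padL_injective (m₁ m₂ : ℕ) : Function.Injective (padL m₁ m₂) :=
  fun _ _ h => funext fun i => congrFun h (Sum.inl i)

/-- For `H = [[F, D, 0], [A, B, C]]` over `𝔽₂` with `Dᵀ D = 0` and `Dᵀ F = 0`:
every `(0, b, 0)` with `b ∈ ker B` satisfies `H (0,b,0) = (D b, 0)`, this image lies in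
the radical of `range (F|D)` (embedded in the first `m₁` coordinates), and consequently
`dim (rad range (F|D) ∩ H (ker Hᵀ H)) ≥ dim (D (ker B))`. -/
theorem kernel_B_gives_radical_elements {m₁ m₂ g d c : ℕ}
    (F : Matrix (Fin m₁) (Fin g) (ZMod 2)) (D : Matrix (Fin m₁) (Fin d) (ZMod 2))
    (A : Matrix (Fin m₂) (Fin g) (ZMod 2)) (B : Matrix (Fin m₂) (Fin d) (ZMod 2))
    (C : Matrix (Fin m₂) (Fin c) (ZMod 2))
    (hDD : Dᵀ * D = 0) (hDF : Dᵀ * F = 0)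
    (H : Matrix (Fin m₁ ⊕ Fin m₂) (Fin g ⊕ (Fin d ⊕ Fin c)) (ZMod 2))
    (hH : H = Matrix.of (Sum.elim
      (fun i => Sum.elim (F i) (Sum.elim (D i) (fun _ => 0)))
      (fun i => Sum.elim (A i) (Sum.elim (B i) (C i)))))
    (FD : Matrix (Fin m₁) (Fin g ⊕ Fin d) (ZMod 2))
    (hFD : FD = Matrix.of (fun i => Sum.elim (F i) (D i))) :
    (∀ b : Fin d → ZMod 2, B.mulVec b = 0 →
      (H.mulVec (Sum.elim (fun _ => 0) (Sum.elim b (fun _ => 0))) =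
          Sum.elim (D.mulVec b) 0 ∧
        D.mulVec b ∈ LinearMap.range FD.mulVecLin ∧
        ∀ w ∈ LinearMap.range FD.mulVecLin,
          dotProduct (D.mulVec b) w = 0)) ∧
    Module.finrank (ZMod 2)
        ↥(Submodule.map D.mulVecLin (LinearMap.ker B.mulVecLin)) ≤
      Module.finrank (ZMod 2)
        ↥(Submodule.map (padL m₁ m₂)
            (LinearMap.range FD.mulVecLin ⊓ dualOrth (LinearMap.range FD.mulVecLin)) ⊓
          Submodule.map H.mulVecLin (LinearMap.ker (Hᵀ * H).mulVecLin)) := by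
  obtain rfl : FD = fromCols F D := hFD
  set T : Matrix (Fin m₁) (Fin g ⊕ (Fin d ⊕ Fin c)) (ZMod 2) := fromCols F (fromCols D 0)
  obtain rfl : H = fromRows T (fromCols A (fromCols B C)) := hH
  have hDT : Dᵀ * T = 0 := by
    simp only [T, mul_fromCols, hDF, hDD, Matrix.mul_zero, fromCols_zero]
  have hDFD : Dᵀ * fromCols F D = 0 := by simp only [mul_fromCols, hDF, hDD, fromCols_zero]
  have hrad : ∀ b, D *ᵥ b ∈ LinearMap.range (fromCols F D).mulVecLin ⊓
      dualOrth (LinearMap.range (fromCols F D).mulVecLin) :=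
    fun b => ⟨mulVec_mem_range_fromCols_right F D b, mulVec_mem_dualOrth_range hDFD b⟩
  have himage : ∀ b, B *ᵥ b = 0 →
      fromRows T (fromCols A (fromCols B C)) *ᵥ Sum.elim 0 (Sum.elim b 0) =
        Sum.elim (D *ᵥ b) 0 := by
    intro b hb
    simp only [T, fromRows_mulVec, fromCols_mulVec_sumElim, mulVec_zero, hb, zero_add, add_zero]
  refine ⟨fun b hb => ⟨himage b hb, hrad b⟩, ?_⟩
  refine Submodule.finrank_le_finrank_of_map_le (padL_injective m₁ m₂) ?_
  rintro _ ⟨_, ⟨b, hb, rfl⟩, rfl⟩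
  refine ⟨⟨D *ᵥ b, hrad b, rfl⟩, Sum.elim 0 (Sum.elim b 0), ?_, himage b hb⟩
  rw [SetLike.mem_coe, LinearMap.mem_ker, mulVecLin_apply, ← mulVec_mulVec, himage b hb,
    transpose_fromRows_mulVec_sumElim_zero, transpose_mulVec_mulVec_eq_zero hDT]
end

section
/- Let B be an m₂ × d matrix and C an m₂ × c matrix over 𝔽₂ with rank C = c. Set k = dim(range B ∩ range C). Then there exist invertible matrices (column operations: within B, within C, and adding columns of C to columns of B) transforming B into a matrix B' with range(B'|C) = range(B|C) and dim ker B' = d − rank B + k ≥ d − rank B + (rank B + c − m₂) = d + c − m₂. -/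
open Matrix

set_option maxHeartbeats 1000000 in
set_option synthInstance.maxHeartbeats 400000 in
/-- Let `B : m₂ × d` and `C : m₂ × c` over `𝔽₂` with `rank C = c`, and set
`k = dim (range B ∩ range C)`.  Then column operations (an invertible recombination `Q` of
the columns of `B` together with adding columns of `C` via `P`) transform `B` into
`B' = B Q + C P` with `range (B'|C) = range (B|C)`,
`dim ker B' = d − rank B + k` and `dim ker B' ≥ d + c − m₂`. -/
theorem column_ops_enlarge_kernel {m₂ d c : ℕ}
    (B : Matrix (Fin m₂) (Fin d) (ZMod 2)) (C : Matrix (Fin m₂) (Fin c) (ZMod 2))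
    (hC : C.rank = c) (k : ℕ)
    (hk : k = Module.finrank (ZMod 2)
      ↥(LinearMap.range B.mulVecLin ⊓ LinearMap.range C.mulVecLin)) :
    ∃ (Q : Matrix (Fin d) (Fin d) (ZMod 2)) (P : Matrix (Fin c) (Fin d) (ZMod 2)),
      IsUnit Q ∧
      ∀ B' : Matrix (Fin m₂) (Fin d) (ZMod 2), B' = B * Q + C * P →
        (LinearMap.range B'.mulVecLin ⊔ LinearMap.range C.mulVecLin =
            LinearMap.range B.mulVecLin ⊔ LinearMap.range C.mulVecLin) ∧
        Module.finrank (ZMod 2) ↥(LinearMap.ker B'.mulVecLin) + B.rank = d + k ∧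
        d + c ≤ Module.finrank (ZMod 2) ↥(LinearMap.ker B'.mulVecLin) + m₂ := by
  classical
  set f := B.mulVecLin with hfdef
  set g := C.mulVecLin with hgdef
  -- `g` is injective since `rank C = c`
  have hkerg : LinearMap.ker g = ⊥ := by
    have h1 := LinearMap.finrank_range_add_finrank_ker g
    rw [Module.finrank_fin_fun] at h1
    have hrg : Module.finrank (ZMod 2) ↥(LinearMap.range g) = c := hC
    rw [hrg] at h1
    have : Module.finrank (ZMod 2) ↥(LinearMap.ker g) = 0 := by omega
    exact Submodule.finrank_eq_zero.mp this
  have hginj : Function.Injective g := LinearMap.ker_eq_bot.mp hkerg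
  set W : Submodule (ZMod 2) (Fin m₂ → ZMod 2) := LinearMap.range f ⊓ LinearMap.range g with hWdef
  set S : Submodule (ZMod 2) (Fin d → ZMod 2) := W.comap f with hSdef
  obtain ⟨T, hT⟩ := Submodule.exists_isCompl S
  set πS := S.linearProjOfIsCompl T hT with hπS
  -- the inverse of `g` on its range
  set eg := LinearEquiv.ofInjective g hginj with heg
  have hge : ∀ w : LinearMap.range g, g (eg.symm w) = (w : Fin m₂ → ZMod 2) := by
    intro w
    have := eg.apply_symm_apply w
    have h2 : ((eg (eg.symm w) : LinearMap.range g) : Fin m₂ → ZMod 2) = (w : Fin m₂ → ZMod 2) := by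
      rw [this]
    rwa [LinearEquiv.ofInjective_apply] at h2
  -- build `p` vanishing on `T` with `g (p s) = - f s` for `s ∈ S`
  have hSmem : ∀ s : S, f (s : Fin d → ZMod 2) ∈ LinearMap.range g := fun s =>
    (inf_le_right : W ≤ LinearMap.range g) s.2
  set e1 : S →ₗ[ZMod 2] ↥(LinearMap.range g) :=
    LinearMap.codRestrict (LinearMap.range g) (f ∘ₗ S.subtype) hSmem with he1
  set p : (Fin d → ZMod 2) →ₗ[ZMod 2] (Fin c → ZMod 2) :=
    -(eg.symm.toLinearMap ∘ₗ e1 ∘ₗ πS) with hp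
  have hgp : ∀ x : Fin d → ZMod 2, g (p x) = -(f ((πS x : Fin d → ZMod 2))) := by
    intro x
    simp only [hp, LinearMap.neg_apply, LinearMap.comp_apply, map_neg, LinearEquiv.coe_coe]
    rw [hge]
    rfl
  refine ⟨1, LinearMap.toMatrix' p, isUnit_one, ?_⟩
  intro B' hB'
  rw [Matrix.mul_one] at hB'
  have hP : (LinearMap.toMatrix' p).mulVecLin = p := by
    rw [← Matrix.toLin'_apply', Matrix.toLin'_toMatrix']
  have hB'lin : B'.mulVecLin = f + g ∘ₗ p := by
    rw [hB', Matrix.mulVecLin_add, Matrix.mulVecLin_mul, hP, hgdef]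
  -- value of B' : B' x = f (x - πS x)
  have hB'x : ∀ x : Fin d → ZMod 2, B'.mulVecLin x = f (x - (πS x : Fin d → ZMod 2)) := by
    intro x
    rw [hB'lin]
    simp only [LinearMap.add_apply, LinearMap.comp_apply, hgp, map_sub]
    abel
  -- kernel of B' is S
  have hker : LinearMap.ker B'.mulVecLin = S := by
    ext x
    simp only [LinearMap.mem_ker, hB'x]
    constructor
    · intro hx
      have ht : x - (πS x : Fin d → ZMod 2) ∈ T := by
        have h2 := Submodule.projection_add_projection_eq_self hT x
        have h3 : x - (πS x : Fin d → ZMod 2)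
            = (T.linearProjOfIsCompl S hT.symm x : Fin d → ZMod 2) :=
          sub_eq_of_eq_add' h2.symm
        rw [h3]; exact (T.linearProjOfIsCompl S hT.symm x).2
      have hs : x - (πS x : Fin d → ZMod 2) ∈ S := by
        refine Submodule.mem_comap.mpr ?_
        rw [hx]; exact W.zero_mem
      have h0 : x - (πS x : Fin d → ZMod 2) = 0 := by
        have := hT.inf_eq_bot
        have hmem : x - (πS x : Fin d → ZMod 2) ∈ S ⊓ T := ⟨hs, ht⟩
        rw [this] at hmem
        simpa using hmem
      have : x = (πS x : Fin d → ZMod 2) := by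
        have := sub_eq_zero.mp h0; exact this
      rw [this]; exact (πS x).2
    · intro hx
      have : πS x = ⟨x, hx⟩ := Submodule.linearProjOfIsCompl_apply_left hT ⟨x, hx⟩
      rw [this]
      simp
  -- dimension of S
  have hkf : LinearMap.ker f ≤ S := by
    intro x hx
    refine Submodule.mem_comap.mpr ?_
    rw [LinearMap.mem_ker.mp hx]
    exact W.zero_mem
  have hdimS : Module.finrank (ZMod 2) S =
      Module.finrank (ZMod 2) W + Module.finrank (ZMod 2) ↥(LinearMap.ker f) := by
    have h1 := LinearMap.finrank_range_add_finrank_ker (f.domRestrict S)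
    have hr : LinearMap.range (f.domRestrict S) = S.map f := by
      rw [LinearMap.range_domRestrict]
    have hmap : S.map f = W := by
      rw [hSdef, Submodule.map_comap_eq]
      exact inf_eq_right.mpr (inf_le_left : W ≤ LinearMap.range f)
    have hkr : LinearMap.ker (f.domRestrict S) = (LinearMap.ker f).comap S.subtype :=
      LinearMap.ker_domRestrict S f
    have hkeq : Module.finrank (ZMod 2) ↥((LinearMap.ker f).comap S.subtype) =
        Module.finrank (ZMod 2) ↥(LinearMap.ker f) :=
      (Submodule.comapSubtypeEquivOfLe hkf).finrank_eq
    rw [hr, hmap, hkr, hkeq] at h1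
    omega
  have hrankB : B.rank = Module.finrank (ZMod 2) ↥(LinearMap.range f) := rfl
  have hrn := LinearMap.finrank_range_add_finrank_ker f
  rw [Module.finrank_fin_fun] at hrn
  refine ⟨?_, ?_, ?_⟩
  · -- range equality
    apply le_antisymm
    · refine sup_le ?_ le_sup_right
      rintro _ ⟨x, rfl⟩
      rw [hB'lin]
      exact Submodule.add_mem _
        (Submodule.mem_sup_left (LinearMap.mem_range_self f x))
        (Submodule.mem_sup_right (LinearMap.mem_range_self g (p x)))
    · refine sup_le ?_ le_sup_right
      rintro _ ⟨x, rfl⟩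
      have : f x = B'.mulVecLin x - g (p x) := by
        rw [hB'lin]; simp
      rw [this]
      exact Submodule.sub_mem _
        (Submodule.mem_sup_left (LinearMap.mem_range_self _ x))
        (Submodule.mem_sup_right (LinearMap.mem_range_self g (p x)))
  · rw [hker, hrankB, hdimS, hk]
    omega
  · have hsup : Module.finrank (ZMod 2) ↥(LinearMap.range f ⊔ LinearMap.range g) +
        Module.finrank (ZMod 2) ↥W =
        Module.finrank (ZMod 2) ↥(LinearMap.range f) +
        Module.finrank (ZMod 2) ↥(LinearMap.range g) :=
      Submodule.finrank_sup_add_finrank_inf_eq _ _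
    have hsuple : Module.finrank (ZMod 2) ↥(LinearMap.range f ⊔ LinearMap.range g) ≤ m₂ := by
      have := Submodule.finrank_le (LinearMap.range f ⊔ LinearMap.range g)
      rwa [Module.finrank_fin_fun] at this
    have hrg : Module.finrank (ZMod 2) ↥(LinearMap.range g) = c := hC
    rw [hrg] at hsup
    rw [hker, hdimS]
    omega
end

section
/- Let H ∈ 𝔽₂^{m×n}, let s ∈ 𝔽₂^n, H_s = diag(H s)·H, C_s = range H_s, and suppose d¹, …, dᵏ ∈ 𝔽₂^n are drawn independently and uniformly at random. If H_s is surjective onto C_s and rad C_s has codimension g in C_s, then Pr[s ∈ ∩_{i=1}^{k} ker(H_{dⁱ}ᵀ H_{dⁱ})] ≥ Pr[∀ i: H_s dⁱ ∈ rad C_s] = (2^{−g})^k = 2^{−gk}. -/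
open Matrix

/-! Over `𝔽₂` one has `H_d s = (H s) ⊙ (H d) = H_s d` and `x² = x`, hence
`H_dᵀ H_d s = Hᵀ (H d ⊙ H d ⊙ H s) = Hᵀ (H s ⊙ H s ⊙ H d) = H_sᵀ (H_s d)`, which vanishes as soon as
`H_s d` is orthogonal to `C_s`; this gives the inequality. The good tuples are the `k`-tuples in
the preimage of `rad C_s` under `H_s`, a subspace of dimension `n - g` by rank–nullity. -/

theorem hvec_eq_diagonal_mul {m n : ℕ} (H : Matrix (Fin m) (Fin n) (ZMod 2)) (a : Fin n → ZMod 2) :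
    Hvec H a = diagonal (H *ᵥ a) * H := by
  ext i j
  simp [Hvec]

theorem hvec_mulVec {m n : ℕ} (H : Matrix (Fin m) (Fin n) (ZMod 2)) (a b : Fin n → ZMod 2) :
    Hvec H a *ᵥ b = (H *ᵥ a) * (H *ᵥ b) := by
  ext i
  simp [hvec_eq_diagonal_mul, ← mulVec_mulVec, mulVec_diagonal]

theorem hvec_mulVec_comm {m n : ℕ} (H : Matrix (Fin m) (Fin n) (ZMod 2)) (a b : Fin n → ZMod 2) :
    Hvec H a *ᵥ b = Hvec H b *ᵥ a := by
  rw [hvec_mulVec, hvec_mulVec, mul_comm]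

theorem hvec_transpose_mulVec {m n : ℕ} (H : Matrix (Fin m) (Fin n) (ZMod 2))
    (a : Fin n → ZMod 2) (v : Fin m → ZMod 2) :
    (Hvec H a)ᵀ *ᵥ v = Hᵀ *ᵥ ((H *ᵥ a) * v) := by
  rw [hvec_eq_diagonal_mul, transpose_mul, diagonal_transpose, ← mulVec_mulVec]
  congr 1
  ext i
  exact mulVec_diagonal _ _ i

theorem transpose_mulVec_eq_zero_of_mem_dualOrth {ι κ : Type*} [Fintype ι] [Fintype κ]
    (A : Matrix ι κ (ZMod 2)) {v : ι → ZMod 2} (hv : v ∈ dualOrth (LinearMap.range A.mulVecLin)) :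
    Aᵀ *ᵥ v = 0 := by
  classical
  ext j
  have hcol : A *ᵥ Pi.single j 1 ∈ LinearMap.range A.mulVecLin := ⟨_, rfl⟩
  rw [mulVec_transpose]
  exact (by simpa using hv _ hcol : v ⬝ᵥ A.col j = 0)

theorem hvec_gram_mulVec_eq_zero {m n : ℕ} (H : Matrix (Fin m) (Fin n) (ZMod 2))
    {s d : Fin n → ZMod 2} (hd : Hvec H s *ᵥ d ∈ dualOrth (LinearMap.range (Hvec H s).mulVecLin)) :
    ((Hvec H d)ᵀ * Hvec H d) *ᵥ s = 0 := by
  -- both sides equal `(H *ᵥ s) * (H *ᵥ d)`, as `x * x = x` in `𝔽₂`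
  have hswap : (H *ᵥ d) * (Hvec H s *ᵥ d) = (H *ᵥ s) * (Hvec H s *ᵥ d) := by
    ext i
    simp only [hvec_mulVec, Pi.mul_apply]
    generalize (H *ᵥ d) i = x
    generalize (H *ᵥ s) i = y
    revert x y
    decide
  rw [← mulVec_mulVec, ← hvec_mulVec_comm, hvec_transpose_mulVec, hswap,
    ← hvec_transpose_mulVec]
  exact transpose_mulVec_eq_zero_of_mem_dualOrth _ hd

theorem LinearMap.finrank_comap_add_finrank_range {K V W : Type*} [DivisionRing K]
    [AddCommGroup V] [Module K V] [AddCommGroup W] [Module K W] [FiniteDimensional K V]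
    (f : V →ₗ[K] W) {R : Submodule K W} (hR : R ≤ LinearMap.range f) :
    Module.finrank K (R.comap f) + Module.finrank K (LinearMap.range f) =
      Module.finrank K R + Module.finrank K V := by
  have hrange : LinearMap.range (f.domRestrict (R.comap f)) = R := by
    rw [LinearMap.range_domRestrict, Submodule.map_comap_eq, inf_eq_right.mpr hR]
  have hker : Module.finrank K (LinearMap.ker (f.domRestrict (R.comap f))) =
      Module.finrank K (LinearMap.ker f) := by
    rw [LinearMap.ker_domRestrict]
    exact (Submodule.comapSubtypeEquivOfLe (LinearMap.ker_le_comap f)).finrank_eq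
  have hrestrict := (f.domRestrict (R.comap f)).finrank_range_add_finrank_ker
  rw [hrange, hker] at hrestrict
  rw [← hrestrict, ← f.finrank_range_add_finrank_ker]
  ring

theorem Nat.card_setOf_forall_mem {α : Type*} (k : ℕ) (S : Set α) :
    Nat.card {t : Fin k → α | ∀ i, t i ∈ S} = Nat.card S ^ k :=
  (Nat.card_congr Equiv.subtypePiEquivPi).trans (by rw [Nat.card_fun, Nat.card_fin])

/-- Probabilities over the uniform `(d¹, …, dᵏ)` are encoded as counts of tuples out of `2^{nk}`. -/
theorem double_meyer_success_probability {m n g k : ℕ}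
    (H : Matrix (Fin m) (Fin n) (ZMod 2)) (s : Fin n → ZMod 2)
    (rad : Submodule (ZMod 2) (Fin m → ZMod 2))
    (hrad : rad = LinearMap.range (Hvec H s).mulVecLin ⊓
      dualOrth (LinearMap.range (Hvec H s).mulVecLin))
    (hg : Module.finrank (ZMod 2) rad + g =
      Module.finrank (ZMod 2) (LinearMap.range (Hvec H s).mulVecLin)) :
    Nat.card {t : Fin k → (Fin n → ZMod 2) |
        ∀ i, (Hvec H s).mulVec (t i) ∈ rad}
      ≤ Nat.card {t : Fin k → (Fin n → ZMod 2) |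
        ∀ i, ((Hvec H (t i))ᵀ * Hvec H (t i)).mulVec s = 0} ∧
    Nat.card {t : Fin k → (Fin n → ZMod 2) |
        ∀ i, (Hvec H s).mulVec (t i) ∈ rad} * 2 ^ (g * k) = 2 ^ (n * k) := by
  refine ⟨Nat.card_mono (Set.toFinite _) fun t ht i => hvec_gram_mulVec_eq_zero H (hrad ▸ ht i).2,
    ?_⟩
  have hradle : rad ≤ LinearMap.range (Hvec H s).mulVecLin := hrad ▸ inf_le_left
  have hdim := LinearMap.finrank_comap_add_finrank_range _ hradle
  rw [Module.finrank_fin_fun] at hdim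
  have hcard : Nat.card (rad.comap (Hvec H s).mulVecLin) =
      2 ^ Module.finrank (ZMod 2) (rad.comap (Hvec H s).mulVecLin) := by
    rw [Module.natCard_eq_pow_finrank (K := ZMod 2), Nat.card_zmod]
  have htuples : Nat.card {t : Fin k → (Fin n → ZMod 2) | ∀ i, (Hvec H s).mulVec (t i) ∈ rad} =
      Nat.card (rad.comap (Hvec H s).mulVecLin) ^ k :=
    Nat.card_setOf_forall_mem k (rad.comap (Hvec H s).mulVecLin : Set (Fin n → ZMod 2))
  rw [htuples, hcard, ← pow_mul, ← pow_add, ← add_mul]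
  congr 2
  omega
end

section
/- Let H ∈ 𝔽₂^{m×n} have block form [[F, D, 0],[A, B, C]] with range D ⊆ rad(range(F|D)) and supp(range D) = [m₁] (the range of D has full support on the first m₁ coordinates). If i ∈ [m₁] is such that there exists d ∈ 𝔽₂^n with H d = eⁱ (i is a 'singleton'), we get a contradiction; hence every singleton index i (i.e., eⁱ ∈ range H) satisfies i > m₁. -/
open Matrix

/-! If `H x = eⁱ` with `i` a row of the top block `[F, D, 0]`, then `eⁱ` lies in the range
of `F|D`. Any `v ∈ range D` with `vᵢ ≠ 0` (full support) is orthogonal to that range, yet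
`⟨v, eⁱ⟩ = vᵢ`. -/

theorem mulVec_blockRows_inl {R m₁ m₂ g d c : Type*} [NonUnitalNonAssocSemiring R]
    [Fintype g] [Fintype d] [Fintype c]
    (F : Matrix m₁ g R) (D : Matrix m₁ d R) (A : Matrix m₂ g R) (B : Matrix m₂ d R)
    (C : Matrix m₂ c R) (x : g ⊕ (d ⊕ c) → R) (j : m₁) :
    (of (Sum.elim (fun i => Sum.elim (F i) (Sum.elim (D i) (fun _ => 0)))
        (fun i => Sum.elim (A i) (Sum.elim (B i) (C i))))).mulVec x (Sum.inl j) =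
      (of fun i => Sum.elim (F i) (D i)).mulVec
        (Sum.elim (fun k => x (Sum.inl k)) (fun k => x (Sum.inr (Sum.inl k)))) j := by
  simp [mulVec, dotProduct, Fintype.sum_sum_type]

theorem apply_eq_zero_of_single_mem {R n : Type*} [NonAssocSemiring R] [Fintype n]
    [DecidableEq n] {S : Set (n → R)} {v : n → R} (hv : ∀ w ∈ S, v ⬝ᵥ w = 0) {i : n}
    (hi : Pi.single i 1 ∈ S) : v i = 0 := by
  simpa using hv _ hi

/-- For `H = [[F, D, 0], [A, B, C]]` over `𝔽₂` with `range D ⊆ rad (range (F|D))` and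
`supp (range D) = [m₁]`, no standard basis vector `eⁱ` with `i ≤ m₁` lies in `range H`:
every singleton index lies among the redundant rows. -/
theorem no_singleton_in_secret_rows {m₁ m₂ g d c : ℕ}
    (F : Matrix (Fin m₁) (Fin g) (ZMod 2)) (D : Matrix (Fin m₁) (Fin d) (ZMod 2))
    (A : Matrix (Fin m₂) (Fin g) (ZMod 2)) (B : Matrix (Fin m₂) (Fin d) (ZMod 2))
    (C : Matrix (Fin m₂) (Fin c) (ZMod 2))
    (H : Matrix (Fin m₁ ⊕ Fin m₂) (Fin g ⊕ (Fin d ⊕ Fin c)) (ZMod 2))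
    (hH : H = Matrix.of (Sum.elim
      (fun i => Sum.elim (F i) (Sum.elim (D i) (fun _ => 0)))
      (fun i => Sum.elim (A i) (Sum.elim (B i) (C i)))))
    (FD : Matrix (Fin m₁) (Fin g ⊕ Fin d) (ZMod 2))
    (hFD : FD = Matrix.of (fun i => Sum.elim (F i) (D i)))
    (hDrad : ∀ v ∈ LinearMap.range D.mulVecLin,
      v ∈ LinearMap.range FD.mulVecLin ∧
        ∀ w ∈ LinearMap.range FD.mulVecLin, dotProduct v w = 0)
    (hsupp : ∀ j : Fin m₁, ∃ v ∈ LinearMap.range D.mulVecLin, v j ≠ 0) :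
    ∀ i : Fin m₁, ¬ ∃ x : (Fin g ⊕ (Fin d ⊕ Fin c)) → ZMod 2,
      H.mulVec x = Pi.single (Sum.inl i) 1 := by
  rintro i ⟨x, hx⟩
  have hsingle : Pi.single i 1 ∈ LinearMap.range FD.mulVecLin := by
    refine ⟨Sum.elim (fun k => x (Sum.inl k)) (fun k => x (Sum.inr (Sum.inl k))), funext fun j => ?_⟩
    rw [mulVecLin_apply, hFD, ← mulVec_blockRows_inl F D A B C, ← hH, hx]
    simp [Pi.single_apply]
  obtain ⟨v, hv, hvi⟩ := hsupp i
  exact hvi (apply_eq_zero_of_single_mem (hDrad v hv).2 hsingle)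
end
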